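/- The number of simple graphs on the labeled vertex set {0,1,2,3,4} (i.e., Fin 5) that are polygonal 2-trees is exactly 142. -/

import Mathlib

open SimpleGraph

/-- The graph obtained from `G` by adding a path of `m` new vertices `w_0, …, w_{m-1}`
together with the edges `{u, w_0}`, `{w_i, w_{i+1}}` for `i + 1 < m`, and `{w_{m-1}, v}`,
thereby creating a new cycle of length `m + 2` through the edge `{u, v}`. -/
def SimpleGraph.pathExtend {V : Type} (G : SimpleGraph V) (u v : V) (m : ℕ) :
    SimpleGraph (V ⊕ Fin m) :=
  SimpleGraph.fromRel (fun a b =>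
    (∃ x y : V, a = Sum.inl x ∧ b = Sum.inl y ∧ G.Adj x y) ∨
    (∃ i : Fin m, a = Sum.inl u ∧ b = Sum.inr i ∧ i.val = 0) ∨
    (∃ i j : Fin m, a = Sum.inr i ∧ b = Sum.inr j ∧ j.val = i.val + 1) ∨
    (∃ i : Fin m, a = Sum.inr i ∧ b = Sum.inl v ∧ i.val = m - 1))

/-- A polygonal 2-tree: any cycle graph on `k ≥ 3` vertices is a polygonal 2-tree, and
any graph obtained from a polygonal 2-tree by adding a path of `m ≥ 1` new vertices
whose ends are joined to the two endpoints of an existing edge (creating a new cycle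
of length `m + 2` through that edge) is again a polygonal 2-tree (up to isomorphism). -/
inductive SimpleGraph.IsPolygonal2Tree : {V : Type} → SimpleGraph V → Prop
  | cycle {V : Type} {G : SimpleGraph V} {k : ℕ} (hk : 3 ≤ k)
      (iso : Nonempty (G ≃g SimpleGraph.cycleGraph k)) : G.IsPolygonal2Tree
  | extend {V : Type} {G : SimpleGraph V} {u v : V} (huv : G.Adj u v)
      {m : ℕ} (hm : 1 ≤ m) {W : Type} {H : SimpleGraph W}
      (iso : Nonempty (H ≃g G.pathExtend u v m)) :
      G.IsPolygonal2Tree → H.IsPolygonal2Tree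

/-!
A polygonal 2-tree on `n` vertices is either the `n`-cycle or arises by gluing a path with
`m ≥ 1` inner vertices onto an edge of a polygonal 2-tree on `n - m ≥ 3` vertices. Working up
from the triangle, those on four vertices are the square and the diamond, and those on five
vertices are the pentagon, the house, the book of three triangles and the fan; every extension
of a fixed graph along any of its edges is checked by evaluation. By orbit–stabilizer, a graph
`S` on `Fin 5` has `5! / |Aut S|` labelings, and the automorphism groups of the four shapes
have orders `10, 2, 12, 2`, giving `12 + 60 + 10 + 60 = 142`.
-/

-- The `Decidable` instances for the explicitly listed graphs below exceed the default sizes.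
set_option maxRecDepth 100000
set_option synthInstance.maxSize 512

namespace SimpleGraph

variable {V W : Type}

section pathExtend

variable {G : SimpleGraph V} {u v : V} {m : ℕ}

@[simp]
lemma pathExtend_adj_inl_inl {x y : V} :
    (G.pathExtend u v m).Adj (.inl x) (.inl y) ↔ G.Adj x y := by
  simpa [pathExtend, G.adj_comm] using G.ne_of_adj

@[simp]
lemma pathExtend_adj_inl_inr {x : V} {i : Fin m} :
    (G.pathExtend u v m).Adj (.inl x) (.inr i) ↔ x = u ∧ i.val = 0 ∨ x = v ∧ i.val = m - 1 := by
  simp [pathExtend]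

@[simp]
lemma pathExtend_adj_inr_inl {x : V} {i : Fin m} :
    (G.pathExtend u v m).Adj (.inr i) (.inl x) ↔ x = u ∧ i.val = 0 ∨ x = v ∧ i.val = m - 1 := by
  rw [adj_comm, pathExtend_adj_inl_inr]

@[simp]
lemma pathExtend_adj_inr_inr {i j : Fin m} :
    (G.pathExtend u v m).Adj (.inr i) (.inr j) ↔ j.val = i.val + 1 ∨ i.val = j.val + 1 := by
  simp only [pathExtend, fromRel_adj]
  grind

instance [DecidableEq V] [DecidableRel G.Adj] : DecidableRel (G.pathExtend u v m).Adj
  | .inl _, .inl _ => decidable_of_iff' _ pathExtend_adj_inl_inl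
  | .inl _, .inr _ => decidable_of_iff' _ pathExtend_adj_inl_inr
  | .inr _, .inl _ => decidable_of_iff' _ pathExtend_adj_inr_inl
  | .inr _, .inr _ => decidable_of_iff' _ pathExtend_adj_inr_inr

def Iso.pathExtend {G' : SimpleGraph W} (φ : G ≃g G') (u v : V) (m : ℕ) :
    G.pathExtend u v m ≃g G'.pathExtend (φ u) (φ v) m where
  toEquiv := φ.toEquiv.sumCongr (Equiv.refl _)
  map_rel_iff' {a b} := by
    rcases a with x | i <;> rcases b with y | j <;> simp [φ.map_rel_iff, φ.injective.eq_iff]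

lemma Iso.exists_adj_iso_pathExtend {W' : Type} {H : SimpleGraph W'} {S : SimpleGraph W}
    (e : H ≃g G.pathExtend u v m) (φ : G ≃g S) (huv : G.Adj u v) :
    ∃ a b, S.Adj a b ∧ Nonempty (H ≃g S.pathExtend a b m) :=
  ⟨φ u, φ v, φ.map_rel_iff.2 huv, ⟨e.trans (φ.pathExtend u v m)⟩⟩

lemma natCard_of_iso_pathExtend [Finite V] {H : SimpleGraph W} (e : H ≃g G.pathExtend u v m) :
    Nat.card W = Nat.card V + m := by
  rw [Nat.card_congr e.toEquiv, Nat.card_sum, Nat.card_fin]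

end pathExtend

section Iso

variable [Fintype V] [DecidableEq V] [Fintype W] [DecidableEq W]
  {G : SimpleGraph V} {H : SimpleGraph W} [DecidableRel G.Adj] [DecidableRel H.Adj]

def Iso.equivSubtype : (G ≃g H) ≃ {e : V ≃ W // ∀ a b, H.Adj (e a) (e b) ↔ G.Adj a b} where
  toFun φ := ⟨φ.toEquiv, fun _ _ => φ.map_rel_iff⟩
  invFun e := ⟨e.1, e.2 _ _⟩
  left_inv _ := rfl
  right_inv _ := rfl

instance : Fintype (G ≃g H) := Fintype.ofEquiv _ Iso.equivSubtype.symm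

instance : Decidable (Nonempty (G ≃g H)) :=
  decidable_of_iff (∃ e : V ≃ W, ∀ a b, H.Adj (e a) (e b) ↔ G.Adj a b)
    (nonempty_subtype.symm.trans Iso.equivSubtype.nonempty_congr.symm)

end Iso

namespace IsPolygonal2Tree

variable {G : SimpleGraph V}

lemma of_iso {H : SimpleGraph W} (e : G ≃g H) (h : H.IsPolygonal2Tree) : G.IsPolygonal2Tree := by
  cases h with
  | cycle hk iso => exact .cycle hk ⟨e.trans iso.some⟩
  | extend huv hm iso hG => exact .extend huv hm ⟨e.trans iso.some⟩ hG

lemma pathExtend (h : G.IsPolygonal2Tree) {u v : V} (huv : G.Adj u v) {m : ℕ} (hm : 1 ≤ m) :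
    (G.pathExtend u v m).IsPolygonal2Tree :=
  .extend huv hm ⟨Iso.refl⟩ h

lemma finite (h : G.IsPolygonal2Tree) : Finite V := by
  induction h with
  | cycle _ iso => exact .of_equiv _ iso.some.toEquiv.symm
  | extend _ _ iso _ ih => exact .of_equiv _ iso.some.toEquiv.symm

lemma three_le_natCard (h : G.IsPolygonal2Tree) : 3 ≤ Nat.card V := by
  induction h with
  | cycle hk iso => rwa [Nat.card_congr iso.some.toEquiv, Nat.card_fin]
  | extend _ _ iso hG ih =>
    have := hG.finite
    rw [natCard_of_iso_pathExtend iso.some]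
    omega

end IsPolygonal2Tree

lemma isPolygonal2Tree_cycleGraph {k : ℕ} (hk : 3 ≤ k) : (cycleGraph k).IsPolygonal2Tree :=
  .cycle hk ⟨Iso.refl⟩

section SmallShapes

-- In `diamondGraph` the edge `01` is the diagonal; `bookGraph` is three triangles on the edge
-- `01`, and `fanGraph` joins the vertex `0` to the path `1 - 2 - 3 - 4`.
abbrev diamondGraph : SimpleGraph (Fin 4) :=
  fromRel fun a b => (a, b) ∈ [(0, 1), (0, 2), (0, 3), (1, 2), (1, 3)]

abbrev houseGraph : SimpleGraph (Fin 5) :=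
  fromRel fun a b => (a, b) ∈ [(0, 1), (1, 2), (2, 3), (3, 0), (0, 4), (1, 4)]

abbrev bookGraph : SimpleGraph (Fin 5) :=
  fromRel fun a b => (a, b) ∈ [(0, 1), (0, 2), (0, 3), (0, 4), (1, 2), (1, 3), (1, 4)]

abbrev fanGraph : SimpleGraph (Fin 5) :=
  fromRel fun a b => (a, b) ∈ [(0, 1), (0, 2), (0, 3), (0, 4), (1, 2), (2, 3), (3, 4)]

lemma cycleGraph_three_pathExtend_one_iso : ∀ a b, (cycleGraph 3).Adj a b →
    Nonempty ((cycleGraph 3).pathExtend a b 1 ≃g diamondGraph) := by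
  decide

lemma cycleGraph_three_pathExtend_two_iso : ∀ a b, (cycleGraph 3).Adj a b →
    Nonempty ((cycleGraph 3).pathExtend a b 2 ≃g houseGraph) := by
  decide

lemma cycleGraph_four_pathExtend_one_iso : ∀ a b, (cycleGraph 4).Adj a b →
    Nonempty ((cycleGraph 4).pathExtend a b 1 ≃g houseGraph) := by
  decide

lemma diamondGraph_pathExtend_one_iso : ∀ a b, diamondGraph.Adj a b →
    Nonempty (diamondGraph.pathExtend a b 1 ≃g bookGraph) ∨
      Nonempty (diamondGraph.pathExtend a b 1 ≃g fanGraph) := by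
  decide

lemma diamondGraph_pathExtend_diagonal_iso :
    Nonempty (diamondGraph.pathExtend 0 1 1 ≃g bookGraph) := by
  decide

lemma diamondGraph_pathExtend_side_iso : Nonempty (diamondGraph.pathExtend 0 2 1 ≃g fanGraph) := by
  decide

lemma isPolygonal2Tree_diamondGraph : diamondGraph.IsPolygonal2Tree :=
  ((isPolygonal2Tree_cycleGraph le_rfl).pathExtend (u := 0) (v := 1) (by decide) le_rfl).of_iso
    (cycleGraph_three_pathExtend_one_iso 0 1 (by decide)).some.symm

lemma isPolygonal2Tree_houseGraph : houseGraph.IsPolygonal2Tree :=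
  ((isPolygonal2Tree_cycleGraph le_rfl).pathExtend (u := 0) (v := 1) (by decide) one_le_two).of_iso
    (cycleGraph_three_pathExtend_two_iso 0 1 (by decide)).some.symm

lemma isPolygonal2Tree_bookGraph : bookGraph.IsPolygonal2Tree :=
  (isPolygonal2Tree_diamondGraph.pathExtend (u := 0) (v := 1) (by decide) le_rfl).of_iso
    diamondGraph_pathExtend_diagonal_iso.some.symm

lemma isPolygonal2Tree_fanGraph : fanGraph.IsPolygonal2Tree :=
  (isPolygonal2Tree_diamondGraph.pathExtend (u := 0) (v := 2) (by decide) le_rfl).of_iso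
    diamondGraph_pathExtend_side_iso.some.symm

lemma natCard_iso_cycleGraph_five : Nat.card (cycleGraph 5 ≃g cycleGraph 5) = 10 := by
  rw [Nat.card_eq_fintype_card]
  decide

lemma natCard_iso_houseGraph : Nat.card (houseGraph ≃g houseGraph) = 2 := by
  rw [Nat.card_eq_fintype_card]
  decide

lemma natCard_iso_bookGraph : Nat.card (bookGraph ≃g bookGraph) = 12 := by
  rw [Nat.card_eq_fintype_card]
  decide

lemma natCard_iso_fanGraph : Nat.card (fanGraph ≃g fanGraph) = 2 := by
  rw [Nat.card_eq_fintype_card]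
  decide

end SmallShapes

namespace IsPolygonal2Tree

variable {G : SimpleGraph V}

lemma nonempty_iso_cycleGraph_three (h : G.IsPolygonal2Tree) (hV : Nat.card V = 3) :
    Nonempty (G ≃g cycleGraph 3) := by
  rcases h with @⟨_, _, k, -, ⟨e⟩⟩ | @⟨U, _, _, _, -, m, hm, _, _, ⟨e⟩, hG⟩
  · obtain rfl : k = 3 := by rw [← hV, Nat.card_congr e.toEquiv, Nat.card_fin]
    exact ⟨e⟩
  · have := hG.finite
    have := hG.three_le_natCard
    have := natCard_of_iso_pathExtend e
    omega

lemma nonempty_iso_of_natCard_eq_four (h : G.IsPolygonal2Tree) (hV : Nat.card V = 4) :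
    Nonempty (G ≃g cycleGraph 4) ∨ Nonempty (G ≃g diamondGraph) := by
  rcases h with @⟨_, _, k, -, ⟨e⟩⟩ | @⟨U, _, _, _, huv, m, hm, _, _, ⟨e⟩, hG⟩
  · obtain rfl : k = 4 := by rw [← hV, Nat.card_congr e.toEquiv, Nat.card_fin]
    exact .inl ⟨e⟩
  have := hG.finite
  have := hG.three_le_natCard
  have := natCard_of_iso_pathExtend e
  obtain ⟨hU, rfl⟩ : Nat.card U = 3 ∧ m = 1 := by omega
  obtain ⟨φ⟩ := hG.nonempty_iso_cycleGraph_three hU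
  obtain ⟨a, b, hab, ⟨ψ⟩⟩ := e.exists_adj_iso_pathExtend φ huv
  exact .inr ⟨ψ.trans (cycleGraph_three_pathExtend_one_iso a b hab).some⟩

lemma nonempty_iso_of_natCard_eq_five (h : G.IsPolygonal2Tree) (hV : Nat.card V = 5) :
    Nonempty (G ≃g cycleGraph 5) ∨ Nonempty (G ≃g houseGraph) ∨ Nonempty (G ≃g bookGraph) ∨
      Nonempty (G ≃g fanGraph) := by
  rcases h with @⟨_, _, k, -, ⟨e⟩⟩ | @⟨U, _, _, _, huv, m, hm, _, _, ⟨e⟩, hG⟩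
  · obtain rfl : k = 5 := by rw [← hV, Nat.card_congr e.toEquiv, Nat.card_fin]
    exact .inl ⟨e⟩
  have := hG.finite
  have := hG.three_le_natCard
  have := natCard_of_iso_pathExtend e
  obtain ⟨hU, rfl⟩ | ⟨hU, rfl⟩ : Nat.card U = 3 ∧ m = 2 ∨ Nat.card U = 4 ∧ m = 1 := by omega
  · obtain ⟨φ⟩ := hG.nonempty_iso_cycleGraph_three hU
    obtain ⟨a, b, hab, ⟨ψ⟩⟩ := e.exists_adj_iso_pathExtend φ huv
    exact .inr <| .inl ⟨ψ.trans (cycleGraph_three_pathExtend_two_iso a b hab).some⟩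
  obtain ⟨⟨φ⟩⟩ | ⟨⟨φ⟩⟩ := hG.nonempty_iso_of_natCard_eq_four hU
  · obtain ⟨a, b, hab, ⟨ψ⟩⟩ := e.exists_adj_iso_pathExtend φ huv
    exact .inr <| .inl ⟨ψ.trans (cycleGraph_four_pathExtend_one_iso a b hab).some⟩
  · obtain ⟨a, b, hab, ⟨ψ⟩⟩ := e.exists_adj_iso_pathExtend φ huv
    obtain ⟨⟨χ⟩⟩ | ⟨⟨χ⟩⟩ := diamondGraph_pathExtend_one_iso a b hab
    · exact .inr <| .inr <| .inl ⟨ψ.trans χ⟩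
    · exact .inr <| .inr <| .inr ⟨ψ.trans χ⟩

end IsPolygonal2Tree

lemma isPolygonal2Tree_iff_of_fin_five (G : SimpleGraph (Fin 5)) :
    G.IsPolygonal2Tree ↔ Nonempty (G ≃g cycleGraph 5) ∨ Nonempty (G ≃g houseGraph) ∨
      Nonempty (G ≃g bookGraph) ∨ Nonempty (G ≃g fanGraph) := by
  refine ⟨fun h => h.nonempty_iso_of_natCard_eq_five (Nat.card_fin 5), ?_⟩
  rintro (⟨⟨e⟩⟩ | ⟨⟨e⟩⟩ | ⟨⟨e⟩⟩ | ⟨⟨e⟩⟩)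
  exacts [(isPolygonal2Tree_cycleGraph (by norm_num)).of_iso e,
    isPolygonal2Tree_houseGraph.of_iso e, isPolygonal2Tree_bookGraph.of_iso e,
    isPolygonal2Tree_fanGraph.of_iso e]

section Relabeling

instance : MulAction (Equiv.Perm V) (SimpleGraph V) where
  smul σ G := G.comap σ.symm
  one_smul _ := rfl
  mul_smul _ _ _ := rfl

lemma perm_smul_adj (σ : Equiv.Perm V) (G : SimpleGraph V) (a b : V) :
    (σ • G).Adj a b ↔ G.Adj (σ.symm a) (σ.symm b) := Iff.rfl

lemma mem_orbit_perm_iff {G S : SimpleGraph V} :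
    G ∈ MulAction.orbit (Equiv.Perm V) S ↔ Nonempty (G ≃g S) := by
  constructor
  · rintro ⟨σ, rfl⟩
    exact ⟨Iso.comap σ.symm S⟩
  · rintro ⟨e⟩
    refine ⟨e.toEquiv.symm, ?_⟩
    ext a b
    exact e.map_rel_iff

def stabilizerEquivIso (S : SimpleGraph V) :
    MulAction.stabilizer (Equiv.Perm V) S ≃ (S ≃g S) where
  toFun σ := ⟨σ.1, fun {a b} => by
    have hσ : σ.1 • S = S := σ.2
    simpa [perm_smul_adj] using (congrArg (·.Adj (σ.1 a) (σ.1 b)) hσ).to_iff.symm⟩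
  invFun e := ⟨e.toEquiv, by ext a b; exact e.symm.map_rel_iff⟩
  left_inv _ := rfl
  right_inv _ := rfl

lemma ncard_orbit_perm [Finite V] (S : SimpleGraph V) :
    (MulAction.orbit (Equiv.Perm V) S).ncard = (Nat.card V).factorial / Nat.card (S ≃g S) := by
  rw [← MulAction.index_stabilizer, ← Nat.card_congr (stabilizerEquivIso S), ← Nat.card_perm,
    ← Subgroup.index_mul_card, Nat.mul_div_cancel _ Nat.card_pos]

lemma disjoint_orbit_perm {S T : SimpleGraph V} (h : ¬ Nonempty (S ≃g T)) :
    Disjoint (MulAction.orbit (Equiv.Perm V) S) (MulAction.orbit (Equiv.Perm V) T) :=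
  Set.disjoint_left.2 fun _ hS hT =>
    h ⟨(mem_orbit_perm_iff.1 hS).some.symm.trans (mem_orbit_perm_iff.1 hT).some⟩

end Relabeling

end SimpleGraph

/-- The number of simple graphs on the labeled vertex set `Fin 5` that are polygonal
2-trees is exactly 142. -/
theorem card_labeled_polygonal2Trees_5 :
    Nat.card {G : SimpleGraph (Fin 5) // G.IsPolygonal2Tree} = 142 := by
  let labelings (S : SimpleGraph (Fin 5)) := MulAction.orbit (Equiv.Perm (Fin 5)) S
  have hclasses : {G : SimpleGraph (Fin 5) | G.IsPolygonal2Tree} = labelings (cycleGraph 5) ∪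
      labelings houseGraph ∪ labelings bookGraph ∪ labelings fanGraph := by
    ext G
    simp only [Set.mem_ofPred_eq, Set.mem_union, labelings, mem_orbit_perm_iff,
      isPolygonal2Tree_iff_of_fin_five, or_assoc]
  refine (Nat.card_coe_set_eq {G : SimpleGraph (Fin 5) | G.IsPolygonal2Tree}).trans ?_
  rw [hclasses, Set.ncard_union_eq, Set.ncard_union_eq, Set.ncard_union_eq]
  · simp only [labelings, ncard_orbit_perm, Nat.card_fin, natCard_iso_cycleGraph_five,
      natCard_iso_houseGraph, natCard_iso_bookGraph, natCard_iso_fanGraph]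
    rfl
  all_goals
    try simp only [Set.disjoint_union_left]
    repeat' constructor
    all_goals exact disjoint_orbit_perm (by decide)
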